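/- Let F ⊆ End_k(V) be a finite potent subspace and let φ, ψ ∈ F. Then the endomorphisms φ+ψ+φ∘ψ = (1+φ)(1+ψ)−1 and ψ+φ+ψ∘φ = (1+ψ)(1+φ)−1 are finite potent, and Det^k_V(1+φ) · Det^k_V(1+ψ) = Det^k_V((1+φ)(1+ψ)) = Det^k_V((1+ψ)(1+φ)); explicitly, for any admissible subspaces W_φ for φ, W_ψ for ψ, W for φ+ψ+φ∘ψ, and W' for ψ+φ+ψ∘φ, one has det((1+φ)|_{W_φ}) · det((1+ψ)|_{W_ψ}) = det((1+φ+ψ+φ∘ψ)|_W) = det((1+ψ+φ+ψ∘φ)|_{W'}). -/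

import Mathlib

/-- An endomorphism `φ` of a `k`-vector space `V` is *finite potent* if `φ^n(V)` is
finite-dimensional for some `n ≥ 1`. -/
def IsFinitePotent {k V : Type*} [Field k] [AddCommGroup V] [Module k V]
    (φ : V →ₗ[k] V) : Prop :=
  ∃ n : ℕ, 1 ≤ n ∧ FiniteDimensional k (LinearMap.range (φ ^ n))

/-- A subspace `F ⊆ End_k(V)` is a *finite potent subspace* if there is `n ≥ 1` such that
any composition of `n` elements of `F` has finite-dimensional image. -/
def IsFinitePotentSubspace {k V : Type*} [Field k] [AddCommGroup V] [Module k V]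
    (F : Submodule k (V →ₗ[k] V)) : Prop :=
  ∃ n : ℕ, 1 ≤ n ∧ ∀ f : Fin n → (V →ₗ[k] V), (∀ i, f i ∈ F) →
    FiniteDimensional k (LinearMap.range (List.ofFn f).prod)

/-
`det((1+φ)|_W)` does not depend on the admissible subspace `W`: for admissible `W₁ ⊆ W₂`, the
map `1+φ` is block triangular on `W₂` with respect to `W₁`, and its block on `W₂/W₁` is
unipotent because a power of `φ` maps `W₂` into `W₁`. So all determinants may be computed on one
subspace `U` admissible for `φ`, `ψ` and `φ+ψ+φψ` simultaneously, where multiplicativity is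
`(1+φ)(1+ψ) = 1+(φ+ψ+φψ)`. With `G = span{φ, ψ}` and `N` the exponent of `F`, take `U = Gᴺ • V`:
it is spanned by the images of the words of length `N` in `φ, ψ`, so it is finite-dimensional,
and `φ`, `ψ`, hence `φ+ψ+φψ`, map each step `Gⁱ • V` of the decreasing filtration
`V = G⁰ • V ⊇ G¹ • V ⊇ ⋯` into the next one.
-/

section

open LinearMap
open scoped Pointwise

variable {k V : Type*} [Field k] [AddCommGroup V] [Module k V]

theorem det_one_add_of_isNilpotent [FiniteDimensional k V] {N : Module.End k V}
    (hN : IsNilpotent N) : (1 + N).det = 1 := by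
  simpa [LinearMap.eval_charpoly, sub_neg_eq_add] using
    congrArg (Polynomial.eval 1) hN.neg.charpoly_eq_X_pow_finrank

theorem det_one_add_eq_det_restrict [FiniteDimensional k V] {g : Module.End k V}
    {P : Submodule k V} (hP : ∀ x ∈ P, g x ∈ P) (h1P : ∀ x ∈ P, (1 + g) x ∈ P) {m : ℕ}
    (hm : range (g ^ m) ≤ P) : (1 + g).det = ((1 + g).restrict h1P).det := by
  have hquot : P.mapQ P (1 + g) h1P = 1 + P.mapQ P g hP := by
    ext; simp
  have hnil : IsNilpotent (P.mapQ P g hP) := by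
    refine ⟨m, ?_⟩
    rw [← Submodule.mapQ_pow]
    ext x
    simpa [Submodule.Quotient.mk_eq_zero] using hm (mem_range_self _ x)
  rw [det_eq_det_mul_det P (1 + g) h1P, hquot, det_one_add_of_isNilpotent hnil, mul_one]

theorem det_restrict_of_eq_mul {a b c : Module.End k V} (hc : c = a * b) {U : Submodule k V}
    (ha : ∀ x ∈ U, a x ∈ U) (hb : ∀ x ∈ U, b x ∈ U) (hcU : ∀ x ∈ U, c x ∈ U) :
    (c.restrict hcU).det = (a.restrict ha).det * (b.restrict hb).det := by
  subst hc
  exact LinearMap.det_comp (a.restrict ha) (b.restrict hb)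

structure IsAdmissible (f : Module.End k V) (W : Submodule k V) : Prop where
  finiteDimensional : FiniteDimensional k W
  mapsTo : ∀ x ∈ W, f x ∈ W
  exists_range_pow_le : ∃ n, range (f ^ n) ≤ W

namespace IsAdmissible

variable {f : Module.End k V} {W W₁ W₂ : Submodule k V}

theorem one_add_mapsTo (h : IsAdmissible f W) : ∀ x ∈ W, (1 + f) x ∈ W :=
  fun x hx => W.add_mem hx (h.mapsTo x hx)

theorem sup (h₁ : IsAdmissible f W₁) (h₂ : IsAdmissible f W₂) : IsAdmissible f (W₁ ⊔ W₂) where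
  finiteDimensional := have := h₁.finiteDimensional; have := h₂.finiteDimensional; inferInstance
  mapsTo := show W₁ ⊔ W₂ ≤ (W₁ ⊔ W₂).comap f from
    sup_le (fun x hx => Submodule.mem_sup_left (h₁.mapsTo x hx))
      (fun x hx => Submodule.mem_sup_right (h₂.mapsTo x hx))
  exists_range_pow_le :=
    let ⟨n, hn⟩ := h₁.exists_range_pow_le
    ⟨n, hn.trans le_sup_left⟩

theorem det_restrict_eq_of_le (h₁ : IsAdmissible f W₁) (h₂ : IsAdmissible f W₂)
    (hle : W₁ ≤ W₂) :
    ((1 + f).restrict h₂.one_add_mapsTo).det = ((1 + f).restrict h₁.one_add_mapsTo).det := by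
  have := h₂.finiteDimensional
  obtain ⟨m, hm⟩ := h₁.exists_range_pow_le
  have hrestrict : (1 + f).restrict h₂.one_add_mapsTo = 1 + f.restrict h₂.mapsTo := by
    ext; simp
  have hP : ∀ x ∈ W₁.comap W₂.subtype, f.restrict h₂.mapsTo x ∈ W₁.comap W₂.subtype :=
    fun x hx => h₁.mapsTo x hx
  have hm' : range ((f.restrict h₂.mapsTo) ^ m) ≤ W₁.comap W₂.subtype := by
    rintro _ ⟨x, rfl⟩
    rw [Module.End.pow_restrict]
    exact hm (mem_range_self _ (x : V))
  rw [hrestrict, det_one_add_eq_det_restrict hP (fun x hx => h₁.one_add_mapsTo x hx) hm',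
    ← LinearMap.det_conj _ (Submodule.comapSubtypeEquivOfLe hle)]
  rfl

theorem det_restrict_eq (h₁ : IsAdmissible f W₁) (h₂ : IsAdmissible f W₂) :
    ((1 + f).restrict h₁.one_add_mapsTo).det = ((1 + f).restrict h₂.one_add_mapsTo).det := by
  rw [← h₁.det_restrict_eq_of_le (h₁.sup h₂) le_sup_left,
    h₂.det_restrict_eq_of_le (h₁.sup h₂) le_sup_right]

theorem isFinitePotent (h : IsAdmissible f W) : IsFinitePotent f := by
  obtain ⟨n, hn⟩ := h.exists_range_pow_le
  have := h.finiteDimensional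
  refine ⟨n + 1, n.succ_pos, Submodule.finiteDimensional_of_le (S₂ := W) ?_⟩
  rw [pow_succ]
  exact (range_comp_le_range f (f ^ n)).trans hn

theorem of_filtration {R : ℕ → Submodule k V} (h0 : R 0 = ⊤) (hR : Antitone R)
    (hf : ∀ i, ∀ v ∈ R i, f v ∈ R (i + 1)) (N : ℕ) [FiniteDimensional k (R N)] :
    IsAdmissible f (R N) := by
  have range_pow_le : ∀ j, range (f ^ j) ≤ R j := by
    intro j
    induction j with
    | zero => simp [h0]
    | succ j ih =>
      rintro _ ⟨v, rfl⟩
      rw [pow_succ', Module.End.mul_apply]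
      exact hf j _ (ih (mem_range_self _ v))
  exact ⟨‹_›, fun v hv => hR N.le_succ (hf N v hv), N, range_pow_le N⟩

end IsAdmissible

section PowSmulTop

variable (G : Submodule k (Module.End k V))

theorem antitone_pow_smul_top : Antitone fun j => G ^ j • (⊤ : Submodule k V) := by
  refine antitone_nat_of_succ_le fun j => ?_
  rw [pow_succ, ← smul_eq_mul, Submodule.smul_assoc]
  exact Submodule.smul_mono le_rfl le_top

variable {G} in
theorem apply_mem_pow_succ_smul_top {g : Module.End k V} (hg : g ∈ G) {j : ℕ} {v : V}
    (hv : v ∈ G ^ j • (⊤ : Submodule k V)) : g v ∈ G ^ (j + 1) • (⊤ : Submodule k V) := by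
  rw [pow_succ', ← smul_eq_mul, Submodule.smul_assoc]
  exact Submodule.smul_mem_smul hg hv

theorem finiteDimensional_span_smul_top {s : Set (Module.End k V)} (hs : s.Finite)
    (h : ∀ g ∈ s, FiniteDimensional k (range g)) :
    FiniteDimensional k ↥(Submodule.span k s • (⊤ : Submodule k V)) := by
  have : Finite s := hs.to_subtype
  have : ∀ g : s, FiniteDimensional k (range (g : Module.End k V)) := fun g => h g g.2
  refine Submodule.finiteDimensional_of_le (S₂ := ⨆ g : s, range (g : Module.End k V)) ?_
  refine Submodule.smul_le.mpr fun r hr v _ => ?_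
  induction hr using Submodule.span_induction with
  | mem g hg => exact Submodule.mem_iSup_of_mem ⟨g, hg⟩ (mem_range_self g v)
  | zero => simp
  | add r r' _ _ hr hr' => rw [add_smul]; exact add_mem hr hr'
  | smul c r _ hr => rw [smul_assoc]; exact Submodule.smul_mem _ c hr

end PowSmulTop

namespace IsFinitePotentSubspace

variable {F : Submodule k (Module.End k V)} {φ ψ : Module.End k V}

theorem exists_isAdmissible (hF : IsFinitePotentSubspace F) (hφ : φ ∈ F) (hψ : ψ ∈ F) :
    ∃ U, IsAdmissible φ U ∧ IsAdmissible ψ U ∧ IsAdmissible (φ + ψ + φ * ψ) U := by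
  obtain ⟨N, -, hN⟩ := hF
  set G := Submodule.span k {φ, ψ}
  have hR0 : G ^ 0 • (⊤ : Submodule k V) = ⊤ := by rw [pow_zero, Submodule.one_smul]
  have hsF : ({φ, ψ} : Set (Module.End k V)) ⊆ F :=
    Set.insert_subset hφ (Set.singleton_subset_iff.mpr hψ)
  have : FiniteDimensional k ↥(G ^ N • (⊤ : Submodule k V)) := by
    rw [Submodule.span_pow]
    have hfin : (({φ, ψ} : Set (Module.End k V)) ^ N).Finite :=
      (Set.finite_range fun f : Fin N → ({φ, ψ} : Set (Module.End k V)) =>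
        (List.ofFn fun i => (f i : Module.End k V)).prod).subset fun g hg => Set.mem_pow.mp hg
    refine finiteDimensional_span_smul_top hfin fun g hg => ?_
    obtain ⟨f, rfl⟩ := Set.mem_pow.mp hg
    exact hN (fun i => f i) fun i => hsF (f i).2
  have hφG : φ ∈ G := Submodule.subset_span (by simp)
  have hψG : ψ ∈ G := Submodule.subset_span (by simp)
  refine ⟨_, .of_filtration hR0 (antitone_pow_smul_top G)
      (fun _ _ => apply_mem_pow_succ_smul_top hφG) N,
    .of_filtration hR0 (antitone_pow_smul_top G) (fun _ _ => apply_mem_pow_succ_smul_top hψG) N,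
    .of_filtration hR0 (antitone_pow_smul_top G) (fun i v hv => ?_) N⟩
  have hψv := apply_mem_pow_succ_smul_top hψG hv
  exact add_mem (add_mem (apply_mem_pow_succ_smul_top hφG hv) hψv)
    (antitone_pow_smul_top G (i + 1).le_succ (apply_mem_pow_succ_smul_top hφG hψv))

theorem det_mul_det_eq (hF : IsFinitePotentSubspace F) (hφ : φ ∈ F) (hψ : ψ ∈ F)
    {Wφ Wψ W : Submodule k V} (hφW : IsAdmissible φ Wφ) (hψW : IsAdmissible ψ Wψ)
    (hW : IsAdmissible (φ + ψ + φ * ψ) W) :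
    ((1 + φ).restrict hφW.one_add_mapsTo).det * ((1 + ψ).restrict hψW.one_add_mapsTo).det =
      ((1 + (φ + ψ + φ * ψ)).restrict hW.one_add_mapsTo).det := by
  obtain ⟨U, hφU, hψU, hU⟩ := hF.exists_isAdmissible hφ hψ
  rw [hφW.det_restrict_eq hφU, hψW.det_restrict_eq hψU, hW.det_restrict_eq hU]
  exact (det_restrict_of_eq_mul (by noncomm_ring) _ _ _).symm

end IsFinitePotentSubspace

end

theorem det_one_add_mul_of_finitePotentSubspace
    {k V : Type*} [Field k] [AddCommGroup V] [Module k V]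
    (F : Submodule k (V →ₗ[k] V)) (hF : IsFinitePotentSubspace F)
    (φ ψ : V →ₗ[k] V) (hφ : φ ∈ F) (hψ : ψ ∈ F)
    (Wφ Wψ W W' : Submodule k V)
    (hWφfin : FiniteDimensional k Wφ) (hWψfin : FiniteDimensional k Wψ)
    (hWfin : FiniteDimensional k W) (hW'fin : FiniteDimensional k W')
    (hWφinv : ∀ x ∈ Wφ, φ x ∈ Wφ) (hWψinv : ∀ x ∈ Wψ, ψ x ∈ Wψ)
    (hWinv : ∀ x ∈ W, (φ + ψ + φ * ψ) x ∈ W)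
    (hW'inv : ∀ x ∈ W', (ψ + φ + ψ * φ) x ∈ W')
    (nφ nψ n n' : ℕ)
    (hrφ : LinearMap.range (φ ^ nφ) ≤ Wφ) (hrψ : LinearMap.range (ψ ^ nψ) ≤ Wψ)
    (hr : LinearMap.range ((φ + ψ + φ * ψ) ^ n) ≤ W)
    (hr' : LinearMap.range ((ψ + φ + ψ * φ) ^ n') ≤ W') :
    IsFinitePotent (φ + ψ + φ * ψ) ∧ IsFinitePotent (ψ + φ + ψ * φ) ∧
    LinearMap.det ((1 + φ).restrict
        (fun x hx => Wφ.add_mem hx (hWφinv x hx) : ∀ x ∈ Wφ, (1 + φ) x ∈ Wφ))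
      * LinearMap.det ((1 + ψ).restrict
        (fun x hx => Wψ.add_mem hx (hWψinv x hx) : ∀ x ∈ Wψ, (1 + ψ) x ∈ Wψ))
      = LinearMap.det ((1 + (φ + ψ + φ * ψ)).restrict
          (fun x hx => W.add_mem hx (hWinv x hx) :
            ∀ x ∈ W, (1 + (φ + ψ + φ * ψ)) x ∈ W)) ∧
    LinearMap.det ((1 + (φ + ψ + φ * ψ)).restrict
        (fun x hx => W.add_mem hx (hWinv x hx) :
          ∀ x ∈ W, (1 + (φ + ψ + φ * ψ)) x ∈ W))
      = LinearMap.det ((1 + (ψ + φ + ψ * φ)).restrict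
          (fun x hx => W'.add_mem hx (hW'inv x hx) :
            ∀ x ∈ W', (1 + (ψ + φ + ψ * φ)) x ∈ W')) := by
  have hφW : IsAdmissible φ Wφ := ⟨hWφfin, hWφinv, nφ, hrφ⟩
  have hψW : IsAdmissible ψ Wψ := ⟨hWψfin, hWψinv, nψ, hrψ⟩
  have hW : IsAdmissible (φ + ψ + φ * ψ) W := ⟨hWfin, hWinv, n, hr⟩
  have hW' : IsAdmissible (ψ + φ + ψ * φ) W' := ⟨hW'fin, hW'inv, n', hr'⟩
  have hdet := hF.det_mul_det_eq hφ hψ hφW hψW hW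
  refine ⟨hW.isFinitePotent, hW'.isFinitePotent, hdet, ?_⟩
  rw [← hdet, mul_comm]
  exact hF.det_mul_det_eq hψ hφ hψW hφW hW'
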